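/- arXiv:2403.04276 — 3 statements merged into one kernel-verified Lean document; each statement's English description precedes it below -/
import Mathlib

section
/- Let 𝔅 be a bornology on a metric space X with closed base 𝔅₀, and let ℐ be an ideal on ω. Suppose every family F ⊆ ω^ω of functions with |F| ≤ |𝔅₀| is ℐ-bounded, i.e., there is g ∈ ω^ω with {n : g(n) < f(n)} ∈ ℐ for every f ∈ F. Then X satisfies S1(Γ_{𝔅ˢ}, ℐ-Γ_{𝔅ˢ}): for every sequence {𝒰_n : n ∈ ω} of γ_{𝔅ˢ}-covers 𝒰_n = {U_{n,m} : m ∈ ω} there is a choice m ↦ g(n) such that {U_{n,g(n)} : n ∈ ω} is an ℐ-γ_{𝔅ˢ}-cover of X. -/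
open Set

def IsIdeal (I : Set (Set ℕ)) : Prop :=
  (∀ A ∈ I, ∀ B ⊆ A, B ∈ I) ∧ (∀ A ∈ I, ∀ B ∈ I, A ∪ B ∈ I) ∧
  (∀ A : Set ℕ, A.Finite → A ∈ I) ∧ Set.univ ∉ I

def IsPseudounion (I : Set (Set ℕ)) (A : Set ℕ) : Prop :=
  Aᶜ.Infinite ∧ ∀ K ∈ I, (K \ A).Finite

def enl {X : Type*} [PseudoMetricSpace X] (B : Set X) (δ : ℝ) : Set X :=
  ⋃ x ∈ B, Metric.ball x δ

def IsBornology {X : Type*} (𝔅 : Set (Set X)) : Prop :=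
  (∀ B ∈ 𝔅, ∀ B' ⊆ B, B' ∈ 𝔅) ∧ (∀ B ∈ 𝔅, ∀ B' ∈ 𝔅, B ∪ B' ∈ 𝔅) ∧
  (∀ x : X, ∃ B ∈ 𝔅, x ∈ B)

def IsBase {X : Type*} (𝔅 𝔅₀ : Set (Set X)) : Prop :=
  𝔅₀ ⊆ 𝔅 ∧ ∀ B ∈ 𝔅, ∃ B₀ ∈ 𝔅₀, B ⊆ B₀

def HasClosedBase {X : Type*} [PseudoMetricSpace X] (𝔅 : Set (Set X)) : Prop :=
  ∃ 𝔅₀, IsBase 𝔅 𝔅₀ ∧ ∀ B ∈ 𝔅₀, IsClosed B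

def IGammaCover {X : Type*} [PseudoMetricSpace X] (𝔅 : Set (Set X))
    (I : Set (Set ℕ)) (U : ℕ → Set X) : Prop :=
  (∀ n, IsOpen (U n)) ∧ (⋃ n, U n) = Set.univ ∧
  ∀ B ∈ 𝔅, ∃ δ : ℕ → ℝ, (∀ n, 0 < δ n) ∧ {n | ¬ enl B (δ n) ⊆ U n} ∈ I

def GammaCover {X : Type*} [PseudoMetricSpace X] (𝔅 : Set (Set X))
    (U : ℕ → Set X) : Prop :=
  (∀ n, IsOpen (U n)) ∧ (⋃ n, U n) = Set.univ ∧
  ∀ B ∈ 𝔅, ∃ n₀ : ℕ, ∃ δ : ℕ → ℝ, ∀ n ≥ n₀, 0 < δ n ∧ enl B (δ n) ⊆ U n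

def OBsCover {X : Type*} [PseudoMetricSpace X] (𝔅 : Set (Set X))
    (𝒰 : Set (Set X)) : Prop :=
  (∀ U ∈ 𝒰, IsOpen U) ∧ Set.univ ∉ 𝒰 ∧ ⋃₀ 𝒰 = Set.univ ∧
  ∀ B ∈ 𝔅, ∃ U ∈ 𝒰, ∃ δ > 0, enl B δ ⊆ U

def IHurewicz {X : Type*} [PseudoMetricSpace X] (𝔅 : Set (Set X))
    (I : Set (Set ℕ)) : Prop :=
  ∀ 𝒰 : ℕ → Set (Set X), (∀ n, OBsCover 𝔅 (𝒰 n)) →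
    ∃ V : ℕ → Set (Set X), (∀ n, V n ⊆ 𝒰 n ∧ (V n).Finite) ∧
      ∀ B ∈ 𝔅, ∃ δ : ℕ → ℝ, (∀ n, 0 < δ n) ∧
        {n | ∀ U ∈ V n, ¬ enl B (δ n) ⊆ U} ∈ I

def BsHurewicz {X : Type*} [PseudoMetricSpace X] (𝔅 : Set (Set X)) : Prop :=
  ∀ 𝒰 : ℕ → Set (Set X), (∀ n, OBsCover 𝔅 (𝒰 n)) →
    ∃ V : ℕ → Set (Set X), (∀ n, V n ⊆ 𝒰 n ∧ (V n).Finite) ∧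
      ∀ B ∈ 𝔅, ∃ n₀ : ℕ, ∃ δ : ℕ → ℝ, ∀ n ≥ n₀, 0 < δ n ∧ ∃ U ∈ V n, enl B (δ n) ⊆ U

universe u

/-!
For each `B₀` in the base and each `n`, the γ-cover `U n` has a stage `f B₀ n` from which on its
members contain enlargements of `B₀`. The family `{f B₀ | B₀ ∈ 𝔅₀}` has at most `|𝔅₀|` members, so
a single `g` `I`-dominates all of them. Along the choice `U n (g n)` the enlargement condition for
`B₀` can then fail only on `{n | g n < f B₀ n} ∈ I`, and it passes from `B₀` to every `B ⊆ B₀`.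
-/

section Enlargement

variable {X : Type*} [PseudoMetricSpace X]

theorem enl_mono {B B' : Set X} (h : B ⊆ B') (δ : ℝ) : enl B δ ⊆ enl B' δ :=
  biUnion_subset_biUnion_left h

theorem subset_enl (B : Set X) {δ : ℝ} (hδ : 0 < δ) : B ⊆ enl B δ :=
  fun _ hx => mem_biUnion hx (Metric.mem_ball_self hδ)

/-- Covering `X` comes for free: `I` is proper, so every `B₀` lies in some `V n`. -/
theorem IsBase.iGammaCover {𝔅 𝔅₀ : Set (Set X)} {I : Set (Set ℕ)} (hbase : IsBase 𝔅 𝔅₀)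
    (hB : IsBornology 𝔅) (hI : IsIdeal I) {V : ℕ → Set X} (hV : ∀ n, IsOpen (V n))
    (h : ∀ B₀ ∈ 𝔅₀, ∃ δ : ℕ → ℝ, (∀ n, 0 < δ n) ∧ {n | ¬ enl B₀ (δ n) ⊆ V n} ∈ I) :
    IGammaCover 𝔅 I V := by
  refine ⟨hV, eq_univ_of_forall fun x => ?_, fun B hBmem => ?_⟩
  · obtain ⟨B, hBmem, hxB⟩ := hB.2.2 x
    obtain ⟨B₀, hB₀, hBB₀⟩ := hbase.2 B hBmem
    obtain ⟨δ, hδ, hbad⟩ := h B₀ hB₀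
    obtain ⟨n, hn⟩ : ∃ n, n ∉ {n | ¬ enl B₀ (δ n) ⊆ V n} := by
      by_contra! hall
      exact hI.2.2.2 (eq_univ_of_forall hall ▸ hbad)
    exact mem_iUnion.2 ⟨n, not_not.1 hn (subset_enl B₀ (hδ n) (hBB₀ hxB))⟩
  · obtain ⟨B₀, hB₀, hBB₀⟩ := hbase.2 B hBmem
    obtain ⟨δ, hδ, hbad⟩ := h B₀ hB₀
    exact ⟨δ, hδ, hI.1 _ hbad _ fun n hn hsub => hn ((enl_mono hBB₀ _).trans hsub)⟩

theorem exists_delta_enl_subset_of_le {B : Set X} {U : ℕ → ℕ → Set X} {f : ℕ → ℕ}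
    {δ : ℕ → ℕ → ℝ} (h : ∀ n, ∀ m ≥ f n, 0 < δ n m ∧ enl B (δ n m) ⊆ U n m) (g : ℕ → ℕ) :
    ∃ δ' : ℕ → ℝ, (∀ n, 0 < δ' n) ∧
      {n | ¬ enl B (δ' n) ⊆ U n (g n)} ⊆ {n | g n < f n} := by
  classical
  refine ⟨fun n => if f n ≤ g n then δ n (g n) else 1, fun n => ?_, fun n hn => ?_⟩
  · dsimp only
    split_ifs with hle
    exacts [(h n (g n) hle).1, one_pos]
  · by_contra hle
    rw [mem_ofPred_eq, not_lt] at hle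
    exact hn (by simpa only [if_pos hle] using (h n (g n) hle).2)

end Enlargement

theorem s1_gamma_igamma_of_bounded_general {X : Type u} [MetricSpace X]
    (𝔅 𝔅₀ : Set (Set X)) (hB : IsBornology 𝔅) (hbase : IsBase 𝔅 𝔅₀)
    (I : Set (Set ℕ)) (hI : IsIdeal I)
    (hbd : ∀ F : Set (ℕ → ℕ), Cardinal.lift.{u} (Cardinal.mk ↥F) ≤ Cardinal.lift.{0} (Cardinal.mk ↥𝔅₀) →
      ∃ g : ℕ → ℕ, ∀ f ∈ F, {n : ℕ | g n < f n} ∈ I) :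
    ∀ U : ℕ → ℕ → Set X, (∀ n, GammaCover 𝔅 (U n)) →
      ∃ g : ℕ → ℕ, IGammaCover 𝔅 I (fun n => U n (g n)) := by
  intro U hU
  choose! f δ hf using fun B₀ (hB₀ : B₀ ∈ 𝔅₀) n => (hU n).2.2 B₀ (hbase.1 hB₀)
  obtain ⟨g, hg⟩ := hbd (f '' 𝔅₀) Cardinal.mk_image_le_lift
  refine ⟨g, hbase.iGammaCover hB hI (fun n => (hU n).1 (g n)) fun B₀ hB₀ => ?_⟩
  obtain ⟨δ', hδ', hbad⟩ := exists_delta_enl_subset_of_le (hf B₀ hB₀) g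
  exact ⟨δ', hδ', hI.1 _ (hg _ (mem_image_of_mem f hB₀)) _ hbad⟩

theorem s1_gamma_igamma_of_bounded {X : Type u} [MetricSpace X]
    (𝔅 𝔅₀ : Set (Set X)) (hB : IsBornology 𝔅) (hbase : IsBase 𝔅 𝔅₀)
    (hclosed : ∀ B ∈ 𝔅₀, IsClosed B)
    (I : Set (Set ℕ)) (hI : IsIdeal I)
    (hbd : ∀ F : Set (ℕ → ℕ), Cardinal.lift.{u} (Cardinal.mk ↥F) ≤ Cardinal.lift.{0} (Cardinal.mk ↥𝔅₀) →
      ∃ g : ℕ → ℕ, ∀ f ∈ F, {n : ℕ | g n < f n} ∈ I) :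
    ∀ U : ℕ → ℕ → Set X, (∀ n, GammaCover 𝔅 (U n)) →
      ∃ g : ℕ → ℕ, IGammaCover 𝔅 I (fun n => U n (g n)) :=
  s1_gamma_igamma_of_bounded_general 𝔅 𝔅₀ hB hbase I hI hbd
end

section
/- Let 𝔅 be a bornology on a metric space X with closed base and let ℐ be an ideal on ω that is not tall, i.e., ℐ has a pseudounion. If X satisfies S1(Γ_{𝔅ˢ}, Γ_{𝔅ˢ}), then X satisfies S1(ℐ-Γ_{𝔅ˢ}, Γ_{𝔅ˢ}). -/
open Set

/-!
Enumerate the infinite set `ω ∖ A` increasingly as `e`, where `A` is a pseudounion of `I`. Each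
`K ∈ I` lies in `A` up to finitely many points, so `e⁻¹' K` is finite: along `e` the exceptional
index set of an `I`-`γ`-cover becomes finite, i.e. `k ↦ U (e k)` is a `γ`-cover. Applying
`S1(Γ, Γ)` to these subcovers gives the selection.
-/

open Filter

theorem IsPseudounion.finite_preimage_nth_compl {I : Set (Set ℕ)} {A K : Set ℕ}
    (hA : IsPseudounion I A) (hK : K ∈ I) : (Nat.nth (· ∈ Aᶜ) ⁻¹' K).Finite := by
  have hsub : Nat.nth (· ∈ Aᶜ) ⁻¹' K ⊆ Nat.nth (· ∈ Aᶜ) ⁻¹' (K \ A) :=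
    fun k hk => ⟨hk, Nat.nth_mem_of_infinite hA.1 k⟩
  exact ((hA.2 K hK).preimage (Nat.nth_injective hA.1).injOn).subset hsub

theorem self_subset_enl {X : Type*} [PseudoMetricSpace X] (B : Set X) {δ : ℝ} (hδ : 0 < δ) :
    B ⊆ enl B δ :=
  fun _ hx => mem_biUnion hx (Metric.mem_ball_self hδ)

theorem IGammaCover.gammaCover_comp {X : Type*} [PseudoMetricSpace X] {𝔅 : Set (Set X)}
    {I : Set (Set ℕ)} {U : ℕ → Set X} {e : ℕ → ℕ} (hU : IGammaCover 𝔅 I U)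
    (h𝔅 : ∀ x, ∃ B ∈ 𝔅, x ∈ B) (he : ∀ K ∈ I, (e ⁻¹' K).Finite) :
    GammaCover 𝔅 (U ∘ e) := by
  obtain ⟨hopen, -, hbad⟩ := hU
  have eventually_good : ∀ B ∈ 𝔅, ∃ δ : ℕ → ℝ, (∀ n, 0 < δ n) ∧
      ∀ᶠ k in atTop, enl B (δ (e k)) ⊆ U (e k) := by
    intro B hB
    obtain ⟨δ, hδ, hK⟩ := hbad B hB
    refine ⟨δ, hδ, ?_⟩
    rw [← Nat.cofinite_eq_atTop]
    simpa using (he _ hK).eventually_cofinite_notMem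
  refine ⟨fun k => hopen (e k), eq_univ_of_forall fun x => ?_, fun B hB => ?_⟩
  · obtain ⟨B, hB, hxB⟩ := h𝔅 x
    obtain ⟨δ, hδ, hgood⟩ := eventually_good B hB
    obtain ⟨k, hk⟩ := hgood.exists
    exact mem_iUnion.2 ⟨k, hk (self_subset_enl B (hδ _) hxB)⟩
  · obtain ⟨δ, hδ, hgood⟩ := eventually_good B hB
    obtain ⟨n₀, hn₀⟩ := hgood.exists_forall_of_atTop
    exact ⟨n₀, δ ∘ e, fun k hk => ⟨hδ _, hn₀ k hk⟩⟩

theorem s1_igamma_gamma_of_not_tall_general {X : Type*} [MetricSpace X] (𝔅 : Set (Set X))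
    (hB : IsBornology 𝔅)
    (I : Set (Set ℕ)) (hpu : ∃ A, IsPseudounion I A)
    (hS1 : ∀ U : ℕ → ℕ → Set X, (∀ n, GammaCover 𝔅 (U n)) →
      ∃ g : ℕ → ℕ, GammaCover 𝔅 (fun n => U n (g n))) :
    ∀ U : ℕ → ℕ → Set X, (∀ n, IGammaCover 𝔅 I (U n)) →
      ∃ g : ℕ → ℕ, GammaCover 𝔅 (fun n => U n (g n)) := by
  intro U hU
  obtain ⟨A, hA⟩ := hpu
  obtain ⟨g, hg⟩ := hS1 (fun n => U n ∘ Nat.nth (· ∈ Aᶜ)) fun n =>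
    (hU n).gammaCover_comp hB.2.2 fun _ => hA.finite_preimage_nth_compl
  exact ⟨Nat.nth (· ∈ Aᶜ) ∘ g, hg⟩

theorem s1_igamma_gamma_of_not_tall {X : Type*} [MetricSpace X] (𝔅 : Set (Set X))
    (hB : IsBornology 𝔅) (hcb : HasClosedBase 𝔅)
    (I : Set (Set ℕ)) (hI : IsIdeal I) (hpu : ∃ A, IsPseudounion I A)
    (hS1 : ∀ U : ℕ → ℕ → Set X, (∀ n, GammaCover 𝔅 (U n)) →
      ∃ g : ℕ → ℕ, GammaCover 𝔅 (fun n => U n (g n))) :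
    ∀ U : ℕ → ℕ → Set X, (∀ n, IGammaCover 𝔅 I (U n)) →
      ∃ g : ℕ → ℕ, GammaCover 𝔅 (fun n => U n (g n)) :=
  s1_igamma_gamma_of_not_tall_general 𝔅 hB I hpu hS1
end

section
/- Let 𝔅 be a bornology on a metric space X with closed base 𝔅₀, and let ℐ be an ideal on ω. Assume X is 𝔅ˢ-Lindelöf and that every family of functions ω → ω of cardinality at most |𝔅₀| is ℐ-bounded (|𝔅₀| < 𝔟_ℐ). Then X has the ℐ-𝔅ˢ-Hurewicz property. -/
open Set

universe u

/-! Enumerate countable subcovers `𝒱 n` of the `𝒰 n` by injections into `ℕ`. For a base set `B`,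
the index `f_B n` of a member of `𝒱 n` containing an enlargement of `B` defines a function
`ℕ → ℕ`; there are at most `|𝔅₀|` of these, so one `g` bounds them all modulo `ℐ`, and taking the
members of `𝒱 n` with index `≤ g n` gives the required finite selections. -/

def IBounded (I : Set (Set ℕ)) (F : Set (ℕ → ℕ)) : Prop :=
  ∃ g : ℕ → ℕ, ∀ f ∈ F, {n : ℕ | g n < f n} ∈ I

theorem enl_mono_left {X : Type*} [PseudoMetricSpace X] {B B' : Set X} (h : B ⊆ B') (δ : ℝ) :
    enl B δ ⊆ enl B' δ :=
  biUnion_subset_biUnion_left h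

theorem exists_finite_selection_of_countable {X : Type u} [PseudoMetricSpace X]
    {𝔅₀ : Set (Set X)} {I : Set (Set ℕ)} (hI : ∀ A ∈ I, ∀ B ⊆ A, B ∈ I)
    (hbd : ∀ F : Set (ℕ → ℕ), Cardinal.lift.{u} (Cardinal.mk ↥F) ≤
      Cardinal.lift.{0} (Cardinal.mk ↥𝔅₀) → IBounded I F)
    (𝒱 : ℕ → Set (Set X)) (hcnt : ∀ n, (𝒱 n).Countable)
    (hcov : ∀ n, ∀ B ∈ 𝔅₀, ∃ U ∈ 𝒱 n, ∃ δ > 0, enl B δ ⊆ U) :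
    ∃ V : ℕ → Set (Set X), (∀ n, V n ⊆ 𝒱 n ∧ (V n).Finite) ∧
      ∀ B ∈ 𝔅₀, ∃ δ : ℕ → ℝ, (∀ n, 0 < δ n) ∧ {n | ∀ U ∈ V n, ¬ enl B (δ n) ⊆ U} ∈ I := by
  choose c hc using fun n => countable_iff_exists_injOn.1 (hcnt n)
  choose U hU δ hδ hUδ using fun (B : ↥𝔅₀) n => hcov n B B.2
  obtain ⟨g, hg⟩ := hbd (range fun B n => c n (U B n)) Cardinal.mk_range_le_lift
  refine ⟨fun n => {W ∈ 𝒱 n | c n W ≤ g n}, fun n => ⟨sep_subset _ _, ?_⟩, ?_⟩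
  · refine Finite.of_finite_image ((finite_Iic (g n)).subset ?_) ((hc n).mono (sep_subset _ _))
    rintro _ ⟨W, ⟨-, hW⟩, rfl⟩
    exact hW
  · intro B hB
    refine ⟨δ ⟨B, hB⟩, hδ ⟨B, hB⟩, hI _ (hg _ ⟨⟨B, hB⟩, rfl⟩) _ fun n hn => ?_⟩
    by_contra hle
    exact hn _ ⟨hU _ n, not_lt.1 hle⟩ (hUδ ⟨B, hB⟩ n)

theorem ihurewicz_of_bounding_general {X : Type u} [MetricSpace X]
    (𝔅 𝔅₀ : Set (Set X)) (hbase : IsBase 𝔅 𝔅₀)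
    (I : Set (Set ℕ)) (hI : IsIdeal I)
    (hLin : ∀ 𝒰 : Set (Set X), OBsCover 𝔅 𝒰 →
      ∃ 𝒱 ⊆ 𝒰, 𝒱.Countable ∧ OBsCover 𝔅 𝒱)
    (hbd : ∀ F : Set (ℕ → ℕ), Cardinal.lift.{u} (Cardinal.mk ↥F) ≤ Cardinal.lift.{0} (Cardinal.mk ↥𝔅₀) →
      ∃ g : ℕ → ℕ, ∀ f ∈ F, {n : ℕ | g n < f n} ∈ I) :
    IHurewicz 𝔅 I := by
  intro 𝒰 h𝒰
  choose 𝒱 h𝒱𝒰 hcnt hcov using fun n => hLin (𝒰 n) (h𝒰 n)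
  obtain ⟨V, hV𝒱, hV⟩ := exists_finite_selection_of_countable hI.1 hbd 𝒱 hcnt
    fun n B hB => (hcov n).2.2.2 B (hbase.1 hB)
  refine ⟨V, fun n => ⟨(hV𝒱 n).1.trans (h𝒱𝒰 n), (hV𝒱 n).2⟩, fun B hB => ?_⟩
  obtain ⟨B₀, hB₀, hBB₀⟩ := hbase.2 B hB
  obtain ⟨δ, hδ, hδI⟩ := hV B₀ hB₀
  exact ⟨δ, hδ, hI.1 _ hδI _ fun n hn U hU hBU => hn U hU ((enl_mono_left hBB₀ _).trans hBU)⟩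

theorem ihurewicz_of_bounding {X : Type u} [MetricSpace X]
    (𝔅 𝔅₀ : Set (Set X)) (hB : IsBornology 𝔅) (hbase : IsBase 𝔅 𝔅₀)
    (hclosed : ∀ B ∈ 𝔅₀, IsClosed B)
    (I : Set (Set ℕ)) (hI : IsIdeal I)
    (hLin : ∀ 𝒰 : Set (Set X), OBsCover 𝔅 𝒰 →
      ∃ 𝒱 ⊆ 𝒰, 𝒱.Countable ∧ OBsCover 𝔅 𝒱)
    (hbd : ∀ F : Set (ℕ → ℕ), Cardinal.lift.{u} (Cardinal.mk ↥F) ≤ Cardinal.lift.{0} (Cardinal.mk ↥𝔅₀) →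
      ∃ g : ℕ → ℕ, ∀ f ∈ F, {n : ℕ | g n < f n} ∈ I) :
    IHurewicz 𝔅 I :=
  ihurewicz_of_bounding_general 𝔅 𝔅₀ hbase I hI hLin hbd
end
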